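/- arXiv:1904.00435 — 2 statements merged into one kernel-verified Lean document; each statement's English description precedes it below -/
import Mathlib

section
/- Let V be a finite-dimensional real inner product space, let T and Ψ be linear subspaces of V with orthogonal projections P_T and P_Ψ, let T⊥ denote the orthogonal complement of T with orthogonal projection P_{T⊥}, and let c > 0. Assume ‖(1/c)·P_T ∘ P_Ψ ∘ P_T − P_T‖ < 1/2. Then for every Δ ∈ V one has ‖P_T(Δ)‖ ≤ √(6/c)·(‖P_{T⊥}(Δ)‖ + ‖P_Ψ(Δ)‖). -/
open RealInnerProductSpace

private lemma proj_apply_norm_le' {V : Type*} [NormedAddCommGroup V] [InnerProductSpace ℝ V]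
    (K : Submodule ℝ V) [K.HasOrthogonalProjection] (v : V) :
    ‖(Submodule.orthogonalProjectionOnto K v : V)‖ ≤ ‖v‖ :=
  calc ‖(Submodule.orthogonalProjectionOnto K v : V)‖ = ‖Submodule.orthogonalProjectionOnto K v‖ := rfl
    _ ≤ ‖Submodule.orthogonalProjectionOnto K‖ * ‖v‖ := (Submodule.orthogonalProjectionOnto K).le_opNorm v
    _ ≤ 1 * ‖v‖ := mul_le_mul_of_nonneg_right (Submodule.orthogonalProjectionOnto_norm_le K) (norm_nonneg v)
    _ = ‖v‖ := one_mul _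

private lemma inner_proj_eq' {V : Type*} [NormedAddCommGroup V] [InnerProductSpace ℝ V]
    (K : Submodule ℝ V) [K.HasOrthogonalProjection] {x : V} (hx : x ∈ K) (y : V) :
    ⟪x, (Submodule.orthogonalProjectionOnto K y : V)⟫ = ⟪x, y⟫ := by
  have h : ⟪x, y - (Submodule.orthogonalProjectionOnto K y : V)⟫ = 0 :=
    (Submodule.sub_starProjection_mem_orthogonal y) x hx
  rw [inner_sub_right] at h
  linarith

/-- The perturbation inequality: under the dual-certificate condition
`‖(1/c)·P_T P_Ψ P_T − P_T‖ < 1/2`, every `Δ` satisfies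
`‖P_T Δ‖ ≤ √(6/c)·(‖P_{T⊥} Δ‖ + ‖P_Ψ Δ‖)`. -/
theorem proj_norm_perturbation_bound
    {V : Type*} [NormedAddCommGroup V] [InnerProductSpace ℝ V] [FiniteDimensional ℝ V]
    (T Ψ : Submodule ℝ V) (c : ℝ) (hc : 0 < c)
    (PT PΨ PTperp : V →L[ℝ] V)
    (hPT : PT = T.subtypeL.comp (Submodule.orthogonalProjectionOnto T))
    (hPΨ : PΨ = Ψ.subtypeL.comp (Submodule.orthogonalProjectionOnto Ψ))
    (hPTperp : PTperp = Tᗮ.subtypeL.comp (Submodule.orthogonalProjectionOnto Tᗮ))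
    (hcert : ‖(1 / c) • ((PT.comp PΨ).comp PT) - PT‖ < 1 / 2) :
    ∀ Δ : V, ‖PT Δ‖ ≤ Real.sqrt (6 / c) * (‖PTperp Δ‖ + ‖PΨ Δ‖) := by
  intro Δ
  set x : V := PT Δ with hxdef
  have hxmem : x ∈ T := by
    rw [hxdef, hPT]; exact (Submodule.orthogonalProjectionOnto T Δ).2
  have hPTx : PT x = x := by
    rw [hPT]
    exact (Submodule.starProjection_eq_self_iff (K := T)).mpr hxmem
  set A : V →L[ℝ] V := (1 / c) • ((PT.comp PΨ).comp PT) - PT with hA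
  have hAx : A x = (1 / c) • PT (PΨ x) - x := by
    simp [hA, hPTx]
  have hinner1 : ⟪x, PT (PΨ x)⟫ = ‖PΨ x‖ ^ 2 := by
    rw [hPT]
    have h1 : ⟪x, ((T.subtypeL.comp (Submodule.orthogonalProjectionOnto T)) (PΨ x) : V)⟫ = ⟪x, PΨ x⟫ := by
      simpa using inner_proj_eq' T hxmem (PΨ x)
    rw [h1, hPΨ]
    have h2 := inner_proj_eq' Ψ (Submodule.orthogonalProjectionOnto Ψ x).2 x
    simp only [ContinuousLinearMap.comp_apply, Submodule.subtypeL_apply]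
    rw [real_inner_comm, ← h2, real_inner_self_eq_norm_sq]
  have hinner : ⟪x, A x⟫ = (1 / c) * ‖PΨ x‖ ^ 2 - ‖x‖ ^ 2 := by
    rw [hAx, inner_sub_right, real_inner_smul_right, real_inner_self_eq_norm_sq, hinner1]
  have hbound : |⟪x, A x⟫| ≤ (1 / 2) * ‖x‖ ^ 2 := by
    calc |⟪x, A x⟫| ≤ ‖x‖ * ‖A x‖ := abs_real_inner_le_norm x (A x)
      _ ≤ ‖x‖ * (‖A‖ * ‖x‖) := mul_le_mul_of_nonneg_left (A.le_opNorm x) (norm_nonneg x)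
      _ ≤ ‖x‖ * ((1 / 2) * ‖x‖) :=
          mul_le_mul_of_nonneg_left
            (mul_le_mul_of_nonneg_right hcert.le (norm_nonneg x)) (norm_nonneg x)
      _ = (1 / 2) * ‖x‖ ^ 2 := by ring
  have hkey : ‖x‖ ^ 2 ≤ (2 / c) * ‖PΨ x‖ ^ 2 := by
    rw [hinner] at hbound
    have h1 := (abs_le.mp hbound).1
    have h2 : 2 / c = 2 * (1 / c) := by ring
    rw [h2]
    linarith
  have hsplit : x = Δ - PTperp Δ := by
    rw [hxdef, hPT, hPTperp]
    have := Submodule.starProjection_add_starProjection_orthogonal (K := T) Δ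
    simp only [ContinuousLinearMap.comp_apply, Submodule.subtypeL_apply]
    exact eq_sub_of_add_eq this
  have hsum : ‖PΨ x‖ ≤ ‖PTperp Δ‖ + ‖PΨ Δ‖ := by
    rw [hsplit, map_sub]
    calc ‖PΨ Δ - PΨ (PTperp Δ)‖ ≤ ‖PΨ Δ‖ + ‖PΨ (PTperp Δ)‖ := norm_sub_le _ _
      _ ≤ ‖PΨ Δ‖ + ‖PTperp Δ‖ := by
          have : ‖PΨ (PTperp Δ)‖ ≤ ‖PTperp Δ‖ := by
            rw [hPΨ]; simpa using proj_apply_norm_le' Ψ (PTperp Δ)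
          linarith
      _ = ‖PTperp Δ‖ + ‖PΨ Δ‖ := by ring
  set s : ℝ := ‖PTperp Δ‖ + ‖PΨ Δ‖ with hs
  have hs0 : 0 ≤ s := by positivity
  have hfinal : ‖x‖ ^ 2 ≤ (6 / c) * s ^ 2 := by
    have h2 : ‖PΨ x‖ ^ 2 ≤ s ^ 2 := by
      nlinarith [norm_nonneg (PΨ x)]
    have hc2 : (0:ℝ) ≤ 2 / c := by positivity
    have h3 : (2 / c) * ‖PΨ x‖ ^ 2 ≤ (2 / c) * s ^ 2 := mul_le_mul_of_nonneg_left h2 hc2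
    have h4 : (2 / c) * s ^ 2 ≤ (6 / c) * s ^ 2 := by
      apply mul_le_mul_of_nonneg_right _ (sq_nonneg s)
      rw [div_le_div_iff₀ hc hc]
      nlinarith
    linarith
  calc ‖x‖ = Real.sqrt (‖x‖ ^ 2) := (Real.sqrt_sq (norm_nonneg x)).symm
    _ ≤ Real.sqrt ((6 / c) * s ^ 2) := Real.sqrt_le_sqrt hfinal
    _ = Real.sqrt (6 / c) * s := by
        rw [Real.sqrt_mul (by positivity) (s ^ 2), Real.sqrt_sq hs0]
end

section
/- Let V be a finite-dimensional real inner product space, let T and Ψ be linear subspaces of V with orthogonal projections P_T and P_Ψ, let T⊥ denote the orthogonal complement of T with orthogonal projection P_{T⊥}, and let c > 0. Assume ‖(1/c)·P_T ∘ P_Ψ ∘ P_T − P_T‖ < 1/2. If Δ ∈ V satisfies P_{T⊥}(Δ) = 0 and P_Ψ(Δ) = 0, then Δ = 0. -/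
/-- Uniqueness step: under the dual-certificate condition
`‖(1/c)·P_T P_Ψ P_T − P_T‖ < 1/2`, if `P_{T⊥} Δ = 0` and `P_Ψ Δ = 0` then `Δ = 0`. -/
theorem eq_zero_of_dual_certificate
    {V : Type*} [NormedAddCommGroup V] [InnerProductSpace ℝ V] [FiniteDimensional ℝ V]
    (T Ψ : Submodule ℝ V) (c : ℝ) (hc : 0 < c)
    (PT PΨ PTperp : V →L[ℝ] V)
    (hPT : PT = T.subtypeL.comp T.orthogonalProjection)
    (hPΨ : PΨ = Ψ.subtypeL.comp Ψ.orthogonalProjection)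
    (hPTperp : PTperp = Tᗮ.subtypeL.comp Tᗮ.orthogonalProjection)
    (hcert : ‖(1 / c) • ((PT.comp PΨ).comp PT) - PT‖ < 1 / 2) :
    ∀ Δ : V, PTperp Δ = 0 → PΨ Δ = 0 → Δ = 0 := by
  intro Δ h1 h2
  have hPTΔ : PT Δ = Δ := by
    have := Submodule.starProjection_add_starProjection_orthogonal (K := T) Δ
    rw [hPT]
    rw [hPTperp] at h1
    simp only [ContinuousLinearMap.comp_apply, Submodule.subtypeL_apply] at h1 ⊢
    rw [Submodule.starProjection_apply, Submodule.starProjection_apply, h1, add_zero] at this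
    exact this
  have key : ((1 / c) • ((PT.comp PΨ).comp PT) - PT) Δ = -Δ := by
    simp [hPTΔ, h2]
  have hb := ((1 / c) • ((PT.comp PΨ).comp PT) - PT).le_opNorm Δ
  rw [key, norm_neg] at hb
  by_contra hΔ
  have hpos : 0 < ‖Δ‖ := norm_pos_iff.mpr hΔ
  have : ‖Δ‖ < (1 / 2) * ‖Δ‖ := lt_of_le_of_lt hb (by
    exact mul_lt_mul_of_pos_right hcert hpos)
  linarith
end
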